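/- Let M be a ℤ-module with a translation-invariant pseudo-distance ρ (i.e., ρ(a + c, b + c) = ρ(a, b) for all a, b, c), and let h : ℕ → ℝ≥0 be a function with h(k) → ∞. Suppose that for every a ∈ M there is a constant C(a) > 0 with ρ(0, k·a) ≤ C(a)·h(k) for all k. Then the function ρ̂(a, b) = limsup_{k→∞} ρ(k·a, k·b)/h(k) is a translation-invariant pseudo-distance on M: it is finite, nonnegative, symmetric, satisfies ρ̂(a, a) = 0, the triangle inequality, and ρ̂(a + c, b + c) = ρ̂(a, b). -/
import Mathlib


open Filter

/-- given a translation-invariant pseudo-distance `ρ` on a ℤ-module `M`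
and `h : ℕ → ℝ≥0` tending to infinity such that `ρ(0, k • a) ≤ C(a) h(k)`, the
function `ρ̂(a,b) = limsup_k ρ(k • a, k • b)/h(k)` is a translation-invariant
pseudo-distance: finite (bounded on multiples), nonnegative, vanishing on the
diagonal, symmetric, satisfying the triangle inequality and translation
invariance. -/
theorem limsup_pseudodistance {M : Type*} [AddCommGroup M]
    (ρ : M → M → ℝ)
    (hρnonneg : ∀ a b, 0 ≤ ρ a b)
    (hρrefl : ∀ a, ρ a a = 0)
    (hρsymm : ∀ a b, ρ a b = ρ b a)
    (hρtri : ∀ a b c, ρ a c ≤ ρ a b + ρ b c)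
    (hρinv : ∀ a b c, ρ (a + c) (b + c) = ρ a b)
    (h : ℕ → ℝ) (hhnonneg : ∀ k, 0 ≤ h k)
    (hhtop : Tendsto h atTop atTop)
    (hbound : ∀ a : M, ∃ C : ℝ, 0 < C ∧ ∀ k : ℕ, ρ 0 (k • a) ≤ C * h k) :
    ∀ ρhat : M → M → ℝ,
      (ρhat = fun a b => limsup (fun k : ℕ => ρ (k • a) (k • b) / h k) atTop) →
      (∀ a b, ∃ C : ℝ, ∀ᶠ k : ℕ in atTop, ρ (k • a) (k • b) / h k ≤ C) ∧
      (∀ a b, 0 ≤ ρhat a b) ∧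
      (∀ a, ρhat a a = 0) ∧
      (∀ a b, ρhat a b = ρhat b a) ∧
      (∀ a b c, ρhat a c ≤ ρhat a b + ρhat b c) ∧
      (∀ a b c, ρhat (a + c) (b + c) = ρhat a b) := by
  intro ρhat hdef
  -- translation invariance of ρ gives ρ(k•a, k•b) = ρ(0, k•(b-a))
  have key : ∀ (a b : M) (k : ℕ), ρ (k • a) (k • b) = ρ 0 (k • (b - a)) := by
    intro a b k
    have := hρinv 0 (k • (b - a)) (k • a)
    rw [zero_add, smul_sub, sub_add_cancel] at this
    rw [smul_sub]
    exact this
  -- uniform bound on the quotient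
  have qbound : ∀ a b : M, ∃ C : ℝ, 0 < C ∧ ∀ k : ℕ, ρ (k • a) (k • b) / h k ≤ C := by
    intro a b
    obtain ⟨C, hC, hCb⟩ := hbound (b - a)
    refine ⟨C, hC, fun k => ?_⟩
    rcases eq_or_lt_of_le (hhnonneg k) with hk | hk
    · simp [← hk, hC.le]
    · rw [div_le_iff₀ hk, key]
      exact hCb k
  have qnonneg : ∀ (a b : M) (k : ℕ), 0 ≤ ρ (k • a) (k • b) / h k :=
    fun a b k => div_nonneg (hρnonneg _ _) (hhnonneg k)
  have bddAbove : ∀ a b : M,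
      IsBoundedUnder (· ≤ ·) atTop (fun k : ℕ => ρ (k • a) (k • b) / h k) := by
    intro a b
    obtain ⟨C, _, hC⟩ := qbound a b
    exact isBoundedUnder_of ⟨C, hC⟩
  have bddBelow : ∀ a b : M,
      IsBoundedUnder (· ≥ ·) atTop (fun k : ℕ => ρ (k • a) (k • b) / h k) :=
    fun a b => isBoundedUnder_of ⟨0, qnonneg a b⟩
  have cobdd : ∀ a b : M,
      IsCoboundedUnder (· ≤ ·) atTop (fun k : ℕ => ρ (k • a) (k • b) / h k) :=
    fun a b => (bddBelow a b).isCoboundedUnder_le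
  refine ⟨?_, ?_, ?_, ?_, ?_, ?_⟩
  · intro a b
    obtain ⟨C, _, hC⟩ := qbound a b
    exact ⟨C, Eventually.of_forall hC⟩
  · intro a b
    rw [hdef]
    exact le_limsup_of_frequently_le
      (Frequently.of_forall (qnonneg a b)) (bddAbove a b)
  · intro a
    rw [hdef]
    simp only [hρrefl, zero_div, limsup_const]
  · intro a b
    rw [hdef]
    simp only [hρsymm (_ • a)]
  · intro a b c
    rw [hdef]
    calc limsup (fun k : ℕ => ρ (k • a) (k • c) / h k) atTop
        ≤ limsup ((fun k : ℕ => ρ (k • a) (k • b) / h k) +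
            fun k : ℕ => ρ (k • b) (k • c) / h k) atTop := by
          refine limsup_le_limsup (Eventually.of_forall fun k => ?_) (cobdd a c) ?_
          · show ρ (k • a) (k • c) / h k ≤ ρ (k • a) (k • b) / h k + ρ (k • b) (k • c) / h k
            rw [← add_div]
            exact div_le_div_of_nonneg_right (hρtri _ (k • b) _) (hhnonneg k)
          · exact (isBoundedUnder_le_add (bddAbove a b) (bddAbove b c))
      _ ≤ _ :=
          limsup_add_le (bddBelow a b) (bddAbove a b) (cobdd b c) (bddAbove b c)
  · intro a b c
    rw [hdef]
    have : ∀ k : ℕ, ρ (k • (a + c)) (k • (b + c)) = ρ (k • a) (k • b) := by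
      intro k
      rw [smul_add, smul_add, hρinv]
    simp only [this]
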